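/- Let n ∈ N, m ∈ Z, and c ∈ Z with gcd(c, n) = 1. If m ≡ 1 (mod p) for every prime p dividing n, and m ≡ 1 (mod 4) whenever 4 divides n, then the affine map f: Z/nZ → Z/nZ, y ↦ m·y + c, is a permutation consisting of a single cycle of length n. -/

import Mathlib

/-!
Writing `f y = m y + c`, one has `f^[k] y - y = (1 + m + ⋯ + m^(k-1)) · ((m - 1) y + c)`.
Every prime factor of `n` divides `m - 1`, so `m - 1` is nilpotent in `ℤ/nℤ`, and `c` is a unit;
hence `(m - 1) y + c` is a unit and `y` has period `k` exactly when `n ∣ 1 + m + ⋯ + m^(k-1)`.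
By lifting the exponent, for `p ∣ m - 1` (and `4 ∣ m - 1` if `p = 2`) the geometric sum has the
same `p`-adic valuation as `k`, so this happens exactly when `n ∣ k`.
-/

open Finset Function

theorem affine_iterate_eq {R : Type*} [CommRing R] (a b y : R) (k : ℕ) :
    (fun y => a * y + b)^[k] y = y + (∑ i ∈ range k, a ^ i) * ((a - 1) * y + b) := by
  induction k with
  | zero => simp
  | succ k ih =>
    rw [iterate_succ_apply', ih, geom_sum_succ]
    ring

theorem isPeriodicPt_affine_iff {R : Type*} [CommRing R] {a b y : R}
    (hu : IsUnit ((a - 1) * y + b)) (k : ℕ) :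
    IsPeriodicPt (fun y => a * y + b) k y ↔ ∑ i ∈ range k, a ^ i = 0 := by
  rw [IsPeriodicPt, IsFixedPt, affine_iterate_eq, add_eq_left, hu.mul_left_eq_zero]

theorem dvd_geom_sum_iff_of_dvd_sub_one {R : Type*} [CommRing R] {d x : R} (h : d ∣ x - 1)
    (k : ℕ) : d ∣ ∑ i ∈ range k, x ^ i ↔ d ∣ (k : R) := by
  simpa using dvd_geom_sum₂_iff_of_dvd_sub (n := k) h

theorem Int.natCast_dvd_iff_forall_prime_pow_dvd (n : ℕ) (z : ℤ) :
    (n : ℤ) ∣ z ↔ ∀ p a : ℕ, p.Prime → p ^ a ∣ n → (p : ℤ) ^ a ∣ z := by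
  simp only [← Nat.cast_pow, Int.natCast_dvd]
  exact Nat.dvd_iff_prime_pow_dvd_dvd _ n

theorem Int.emultiplicity_geom_sum {p : ℕ} (hp : p.Prime) {m : ℤ} (hpm : (p : ℤ) ∣ m - 1)
    (h4 : p = 2 → 4 ∣ m - 1) (k : ℕ) :
    emultiplicity (p : ℤ) (∑ i ∈ Finset.range k, m ^ i) = emultiplicity (p : ℤ) k := by
  rcases eq_or_ne m 1 with rfl | hm1
  · simp
  have hpZ : Prime (p : ℤ) := Nat.prime_iff_prime_int.mp hp
  have hpm' : ¬ (p : ℤ) ∣ m := fun h => hpZ.not_dvd_one (by simpa using dvd_sub h hpm)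
  have hlte : emultiplicity (p : ℤ) (m ^ k - 1 ^ k) =
      emultiplicity (p : ℤ) (m - 1) + emultiplicity (p : ℤ) k := by
    rcases eq_or_ne p 2 with rfl | hp2
    · exact_mod_cast Int.two_pow_sub_pow' k (h4 rfl) (by exact_mod_cast hpm')
    · rw [Int.emultiplicity_pow_sub_pow hp (hp.odd_of_ne_two hp2) hpm hpm' k,
        Int.natCast_emultiplicity]
  have hfin : emultiplicity (p : ℤ) (m - 1) ≠ ⊤ :=
    finiteMultiplicity_iff_emultiplicity_ne_top.mp <|
      Int.finiteMultiplicity_iff.mpr ⟨by simpa using hp.ne_one, sub_ne_zero.mpr hm1⟩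
  rw [one_pow, ← geom_sum_mul, emultiplicity_mul hpZ, add_comm _ (emultiplicity _ (k : ℤ))] at hlte
  exact WithTop.add_right_cancel hfin hlte

theorem Int.prime_pow_dvd_geom_sum_iff {p a : ℕ} (hp : p.Prime) {m : ℤ} (hpm : (p : ℤ) ∣ m - 1)
    (h4 : p = 2 → 2 ≤ a → 4 ∣ m - 1) (k : ℕ) :
    (p : ℤ) ^ a ∣ ∑ i ∈ Finset.range k, m ^ i ↔ (p : ℤ) ^ a ∣ k := by
  rcases le_or_gt a 1 with ha | ha
  · exact dvd_geom_sum_iff_of_dvd_sub_one ((pow_dvd_pow _ ha).trans (by simpa using hpm)) k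
  · rw [pow_dvd_iff_le_emultiplicity, pow_dvd_iff_le_emultiplicity,
      Int.emultiplicity_geom_sum hp hpm fun h2 => h4 h2 ha]

theorem Int.natCast_dvd_geom_sum_iff {n : ℕ} {m : ℤ}
    (hm : ∀ p : ℕ, p.Prime → p ∣ n → (p : ℤ) ∣ m - 1) (hm4 : 4 ∣ n → (4 : ℤ) ∣ m - 1) (k : ℕ) :
    (n : ℤ) ∣ ∑ i ∈ Finset.range k, m ^ i ↔ n ∣ k := by
  rw [← Int.natCast_dvd_natCast, Int.natCast_dvd_iff_forall_prime_pow_dvd,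
    Int.natCast_dvd_iff_forall_prime_pow_dvd]
  refine forall₄_congr fun p a hp hpa => ?_
  rcases Nat.eq_zero_or_pos a with rfl | ha
  · simp
  refine Int.prime_pow_dvd_geom_sum_iff hp (hm p hp ((dvd_pow_self p ha.ne').trans hpa)) ?_ k
  rintro rfl h2a
  exact hm4 ((pow_dvd_pow 2 h2a).trans hpa)

theorem ZMod.isNilpotent_intCast_of_forall_prime_dvd {n : ℕ} {a : ℤ}
    (h : ∀ p : ℕ, p.Prime → p ∣ n → (p : ℤ) ∣ a) : IsNilpotent (a : ZMod n) := by
  rcases eq_or_ne a 0 with rfl | ha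
  · simp
  rcases eq_or_ne n 0 with rfl | hn
  · obtain ⟨p, hle, hp⟩ := Nat.exists_infinite_primes (a.natAbs + 1)
    have hpa : p ∣ a.natAbs := Int.natCast_dvd.mp (h p hp (dvd_zero p))
    exact absurd (Nat.le_of_dvd (Int.natAbs_pos.mpr ha) hpa) (by omega)
  refine ⟨n, ?_⟩
  rw [← Int.cast_pow, ZMod.intCast_zmod_eq_zero_iff_dvd, Int.natCast_dvd, Int.natAbs_pow,
    Nat.dvd_pow_self_iff hn (Int.natAbs_ne_zero.mpr ha)]
  intro p hp
  obtain ⟨hp, hpn, -⟩ := Nat.mem_primeFactors.mp hp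
  exact Nat.mem_primeFactors.mpr ⟨hp, Int.natCast_dvd.mp (h p hp hpn), Int.natAbs_ne_zero.mpr ha⟩

/-- Knuth's maximal-period theorem: if `gcd(c,n) = 1`, `m ≡ 1 (mod p)` for
every prime `p ∣ n`, and `m ≡ 1 (mod 4)` whenever `4 ∣ n`, then the affine map
`y ↦ m·y + c` on `ℤ/nℤ` is a permutation consisting of a single cycle of
length `n`. -/
theorem stmt19 (n : ℕ) (m c : ℤ) (hc : Int.gcd c n = 1)
    (hm : ∀ p : ℕ, p.Prime → p ∣ n → (p : ℤ) ∣ (m - 1))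
    (hm4 : 4 ∣ n → (4 : ℤ) ∣ (m - 1)) :
    ∀ y : ZMod n,
      Function.minimalPeriod (fun y : ZMod n => (m : ZMod n) * y + (c : ZMod n)) y = n := by
  intro y
  have hcu : IsUnit (c : ZMod n) := (ZMod.coe_int_isUnit_iff_isCoprime c n).mpr
    (Int.isCoprime_iff_gcd_eq_one.mpr (by rwa [Int.gcd_comm]))
  have hnil : IsNilpotent (((m : ZMod n) - 1) * y) := by
    refine (Commute.all _ y).isNilpotent_mul_right ?_
    exact_mod_cast ZMod.isNilpotent_intCast_of_forall_prime_dvd hm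
  have hu : IsUnit (((m : ZMod n) - 1) * y + c) :=
    hnil.isUnit_add_right_of_commute hcu (Commute.all _ _)
  rw [← Nat.dvd_right_iff_eq]
  intro k
  rw [← isPeriodicPt_iff_minimalPeriod_dvd, isPeriodicPt_affine_iff hu,
    ← Int.natCast_dvd_geom_sum_iff hm hm4, ← ZMod.intCast_zmod_eq_zero_iff_dvd]
  push_cast
  rfl
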